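/- Let f : ℝ_{>0}^n → ℝ, f(x) = ∑_{μ ∈ σ(f)} c_μ x^μ be a signomial, let (H_{v,a}, H_{v,b}) with a ≥ b be a pair of enclosing hyperplanes of σ_+(f), and set A = (H^+_{v,a} ∩ σ_-(f)) ∪ σ_+(f), B = (H^-_{v,b} ∩ σ_-(f)) ∪ σ_+(f). Consider the bipartite graph whose vertex set is the disjoint union of the sets of connected components of f|_A^{-1}(ℝ_{<0}) and of f|_B^{-1}(ℝ_{<0}), with an edge between a component U of f|_A^{-1}(ℝ_{<0}) and a component V of f|_B^{-1}(ℝ_{<0}) whenever U ∩ V ≠ ∅, and let C be the number of connected components of this graph. Then the number of connected components of f^{-1}(ℝ_{<0}) is at most C, and C is at most the number of connected components of f|_A^{-1}(ℝ_{<0}) plus the number of connected components of f|_B^{-1}(ℝ_{<0}). -/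

import Mathlib

open Finset

/-- The signomial `x ↦ ∑_{μ ∈ S} c μ * x^μ` (with real exponents, via `Real.rpow`). -/
noncomputable def sig {n : ℕ} (S : Finset (Fin n → ℝ)) (c : (Fin n → ℝ) → ℝ)
    (x : Fin n → ℝ) : ℝ :=
  ∑ μ ∈ S, c μ * ∏ i, x i ^ μ i

open Classical in
/-- The restriction `f|_F` of the signomial to a subset `F ⊆ ℝⁿ` of exponent vectors. -/
noncomputable def sigOn {n : ℕ} (S : Finset (Fin n → ℝ)) (c : (Fin n → ℝ) → ℝ)
    (F : Set (Fin n → ℝ)) (x : Fin n → ℝ) : ℝ :=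
  ∑ μ ∈ S, if μ ∈ F then c μ * ∏ i, x i ^ μ i else 0

/-- `f⁻¹(ℝ_{<0})`: the points of the positive orthant where the signomial is negative. -/
def negSet {n : ℕ} (S : Finset (Fin n → ℝ)) (c : (Fin n → ℝ) → ℝ) : Set (Fin n → ℝ) :=
  {x | (∀ i, 0 < x i) ∧ sig S c x < 0}

/-- `(f|_F)⁻¹(ℝ_{<0})`. -/
def negSetOn {n : ℕ} (S : Finset (Fin n → ℝ)) (c : (Fin n → ℝ) → ℝ)
    (F : Set (Fin n → ℝ)) : Set (Fin n → ℝ) :=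
  {x | (∀ i, 0 < x i) ∧ sigOn S c F x < 0}

/-- `σ₊(f)`: the positive exponent vectors. -/
def sigPosS {n : ℕ} (S : Finset (Fin n → ℝ)) (c : (Fin n → ℝ) → ℝ) : Set (Fin n → ℝ) :=
  {μ | μ ∈ S ∧ 0 < c μ}

/-- `σ₋(f)`: the negative exponent vectors. -/
def sigNegS {n : ℕ} (S : Finset (Fin n → ℝ)) (c : (Fin n → ℝ) → ℝ) : Set (Fin n → ℝ) :=
  {μ | μ ∈ S ∧ c μ < 0}

/-- The hyperplane `H_{v,a}`. -/
def Hyp {n : ℕ} (v : Fin n → ℝ) (a : ℝ) : Set (Fin n → ℝ) :=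
  {μ | ∑ i, v i * μ i = a}

/-- The closed half-space `H⁺_{v,a}`. -/
def Hplus {n : ℕ} (v : Fin n → ℝ) (a : ℝ) : Set (Fin n → ℝ) :=
  {μ | a ≤ ∑ i, v i * μ i}

/-- The closed half-space `H⁻_{v,a}`. -/
def Hminus {n : ℕ} (v : Fin n → ℝ) (a : ℝ) : Set (Fin n → ℝ) :=
  {μ | ∑ i, v i * μ i ≤ a}

/-- The open half-space `H^{+,∘}_{v,a}`. -/
def HplusO {n : ℕ} (v : Fin n → ℝ) (a : ℝ) : Set (Fin n → ℝ) :=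
  {μ | a < ∑ i, v i * μ i}

/-- The open half-space `H^{-,∘}_{v,a}`. -/
def HminusO {n : ℕ} (v : Fin n → ℝ) (a : ℝ) : Set (Fin n → ℝ) :=
  {μ | ∑ i, v i * μ i < a}

/-- `U` is a connected component of `X` (a maximal nonempty preconnected subset of `X`). -/
def IsConnComp {n : ℕ} (X U : Set (Fin n → ℝ)) : Prop :=
  U.Nonempty ∧ U ⊆ X ∧ IsPreconnected U ∧
    ∀ W, U ⊆ W → W ⊆ X → IsPreconnected W → W = U

/-- The number (cardinality) of connected components of `X`. -/
noncomputable def compCard {n : ℕ} (X : Set (Fin n → ℝ)) : Cardinal :=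
  Cardinal.mk {U : Set (Fin n → ℝ) // IsConnComp X U}

/-- The face `N(f)_v` of the Newton polytope of a signomial with support `S`,
with outer normal vector `v`. -/
def faceOf {n : ℕ} (S : Finset (Fin n → ℝ)) (v : Fin n → ℝ) : Set (Fin n → ℝ) :=
  {ω ∈ convexHull ℝ (↑S : Set (Fin n → ℝ)) |
    ∀ μ ∈ convexHull ℝ (↑S : Set (Fin n → ℝ)), ∑ i, v i * μ i ≤ ∑ i, v i * ω i}

/-!
Fix `x` with `f x < 0`. Along the curve `t ↦ x ⊙ exp (t v)` the monomial `x ^ μ` is scaled by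
`exp (t ⟨v, μ⟩)`, so `f` becomes an exponential sum whose positive terms have exponents in
`[b, a]` and whose negative terms have exponents outside `(b, a)`. By a Descartes rule of signs
this sum is negative on a whole ray from `0`, say `[0, ∞)`. If `f|_A` never becomes negative on
it, comparing growth rates at `∞` shows that the terms with exponent `≥ a` cancel. In the rest,
positive terms have exponents `≥ b` and negative ones `≤ b`, so `exp (-b t) f` is monotone and
`f` is negative on `(-∞, 0]` as well; the same argument there cancels the terms with exponent
`≤ b`, leaving only positive terms: a contradiction. Hence every component of
`f⁻¹(ℝ_{<0})` meets `f|_A⁻¹(ℝ_{<0})` or `f|_B⁻¹(ℝ_{<0})`, and sending a vertex of the graph to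
the component of `f⁻¹(ℝ_{<0})` containing it is constant on the graph's components and onto.
-/

open Real Filter Topology Set

noncomputable def expSum {ι : Type*} (T : Finset ι) (m e : ι → ℝ) (t : ℝ) : ℝ :=
  ∑ μ ∈ T, m μ * exp (e μ * t)

section ExpSum

variable {ι : Type*} {T : Finset ι} {m e : ι → ℝ} {a b c : ℝ}

lemma expSum_neg_exponent (T : Finset ι) (m e : ι → ℝ) (t : ℝ) :
    expSum T m (fun μ => -e μ) t = expSum T m e (-t) := by
  simp [expSum]

lemma expSum_sub_exponent (T : Finset ι) (m e : ι → ℝ) (c t : ℝ) :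
    expSum T m (fun μ => e μ - c) t = exp (-(c * t)) * expSum T m e t := by
  rw [expSum, expSum, Finset.mul_sum]
  refine Finset.sum_congr rfl fun μ _ => ?_
  rw [mul_left_comm, ← exp_add]
  ring_nf

lemma continuous_expSum (T : Finset ι) (m e : ι → ℝ) : Continuous (expSum T m e) := by
  unfold expSum
  fun_prop

lemma hasDerivAt_expSum (T : Finset ι) (m e : ι → ℝ) (t : ℝ) :
    HasDerivAt (expSum T m e) (expSum T (fun μ => m μ * e μ) e t) t := by
  have : HasDerivAt (fun t => ∑ μ ∈ T, m μ * exp (e μ * t))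
      (∑ μ ∈ T, m μ * (exp (e μ * t) * (e μ * 1))) t :=
    HasDerivAt.fun_sum fun μ _ => (((hasDerivAt_id t).const_mul (e μ)).exp).const_mul (m μ)
  exact this.congr_deriv (Finset.sum_congr rfl fun μ _ => by ring)

lemma antitone_expSum (h : ∀ μ ∈ T, m μ * e μ ≤ 0) : Antitone (expSum T m e) :=
  antitone_of_hasDerivAt_nonpos (hasDerivAt_expSum T m e) fun _ =>
    Finset.sum_nonpos fun μ hμ => mul_nonpos_of_nonpos_of_nonneg (h μ hμ) (exp_pos _).le

lemma expSum_neg_of_le (h : ∀ μ ∈ T, m μ * (e μ - c) ≤ 0) {s t : ℝ} (hst : s ≤ t)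
    (hs : expSum T m e s < 0) : expSum T m e t < 0 := by
  have key := antitone_expSum h hst
  rw [expSum_sub_exponent, expSum_sub_exponent] at key
  exact neg_of_mul_neg_right (key.trans_lt (mul_neg_of_pos_of_neg (exp_pos _) hs))
    (exp_pos _).le

lemma expSum_neg_of_ge (h : ∀ μ ∈ T, 0 ≤ m μ * (e μ - c)) {s t : ℝ} (hts : t ≤ s)
    (hs : expSum T m e s < 0) : expSum T m e t < 0 := by
  have h' : ∀ μ ∈ T, m μ * (-e μ - -c) ≤ 0 := fun μ hμ => by linarith [h μ hμ]
  have := expSum_neg_of_le h' (neg_le_neg hts) (by rwa [expSum_neg_exponent, neg_neg])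
  rwa [expSum_neg_exponent, neg_neg] at this

/-- Descartes' rule of signs for the sign pattern `- + -`: after scaling by `exp (-(a t))`, the
derivative has the pattern `+ -`, so it changes sign at most once. -/
lemma ordConnected_setOf_expSum_nonneg (h : ∀ μ ∈ T, m μ * ((e μ - a) * (e μ - b)) ≤ 0) :
    {t | 0 ≤ expSum T m e t}.OrdConnected := by
  refine ⟨fun t₁ h₁ t₂ h₂ t ht => ?_⟩
  simp only [mem_ofPred_eq] at h₁ h₂ ⊢
  by_contra! hneg
  set η := expSum T m (fun μ => e μ - a)
  set φ := expSum T (fun μ => m μ * (e μ - a)) (fun μ => e μ - a)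
  have hη : ∀ s, η s = exp (-(a * s)) * expSum T m e s := expSum_sub_exponent T m e a
  have hη₁ : 0 ≤ η t₁ := hη t₁ ▸ mul_nonneg (exp_pos _).le h₁
  have hη₂ : 0 ≤ η t₂ := hη t₂ ▸ mul_nonneg (exp_pos _).le h₂
  have hηt : η t < 0 := hη t ▸ mul_neg_of_pos_of_neg (exp_pos _) hneg
  have hlt₁ : t₁ < t := ht.1.lt_of_ne (by rintro rfl; linarith)
  have hlt₂ : t < t₂ := ht.2.lt_of_ne (by rintro rfl; linarith)
  obtain ⟨ξ₁, hξ₁, hφ₁⟩ := exists_hasDerivAt_eq_slope η φ hlt₁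
    (continuous_expSum _ _ _).continuousOn fun s _ => hasDerivAt_expSum _ _ _ s
  obtain ⟨ξ₂, hξ₂, hφ₂⟩ := exists_hasDerivAt_eq_slope η φ hlt₂
    (continuous_expSum _ _ _).continuousOn fun s _ => hasDerivAt_expSum _ _ _ s
  have hφ : ∀ μ ∈ T, m μ * (e μ - a) * ((e μ - a) - (b - a)) ≤ 0 := fun μ hμ =>
    (by ring : m μ * (e μ - a) * ((e μ - a) - (b - a)) = m μ * ((e μ - a) * (e μ - b))).trans_le
      (h μ hμ)
  have hneg₁ : φ ξ₁ < 0 := hφ₁ ▸ div_neg_of_neg_of_pos (by linarith) (by linarith)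
  have hpos₂ : 0 < φ ξ₂ := hφ₂ ▸ div_pos (by linarith) (by linarith)
  exact (expSum_neg_of_le hφ (hξ₁.2.trans hξ₂.1).le hneg₁).not_gt hpos₂

lemma tendsto_expSum_atTop (h : ∀ μ ∈ T, 0 < e μ → m μ = 0) :
    Tendsto (expSum T m e) atTop (𝓝 (∑ μ ∈ T with e μ = 0, m μ)) := by
  rw [Finset.sum_filter]
  refine tendsto_finsetSum T fun μ hμ => ?_
  rcases lt_trichotomy (e μ) 0 with he | he | he
  · simpa [he.ne] using
      (tendsto_exp_atBot.comp (tendsto_id.const_mul_atTop_of_neg he)).const_mul (m μ)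
  · simp [he]
  · simp [he.ne', h μ hμ he]

lemma exponent_nonpos_of_expSum_nonneg (h : ∀ μ ∈ T, 0 < e μ → m μ < 0)
    (hnn : ∀ t, 0 ≤ t → 0 ≤ expSum T m e t) : ∀ μ ∈ T, e μ ≤ 0 := by
  classical
  intro μ₀ hμ₀
  by_contra! he
  have hterm : ∀ μ ∈ T, ∀ t, 0 ≤ t → m μ * exp (e μ * t) ≤ |m μ| := by
    intro μ hμ t ht
    rcases le_or_gt (e μ) 0 with he' | he'
    · calc m μ * exp (e μ * t) ≤ |m μ| * exp (e μ * t) :=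
            mul_le_mul_of_nonneg_right (le_abs_self _) (exp_pos _).le
        _ ≤ |m μ| * 1 := by gcongr; exact exp_le_one_iff.2 (mul_nonpos_of_nonpos_of_nonneg he' ht)
        _ = |m μ| := mul_one _
    · exact (mul_neg_of_neg_of_pos (h μ hμ he') (exp_pos _)).le.trans (abs_nonneg _)
  have hbound : ∀ t, 0 ≤ t → expSum T m e t ≤ m μ₀ * exp (e μ₀ * t) + ∑ μ ∈ T, |m μ| := by
    intro t ht
    rw [expSum, ← Finset.add_sum_erase T _ hμ₀]
    gcongr
    exact (Finset.sum_le_sum fun μ hμ => hterm μ (Finset.mem_of_mem_erase hμ) t ht).trans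
      (Finset.sum_le_sum_of_subset_of_nonneg (Finset.erase_subset _ _) fun _ _ _ => abs_nonneg _)
  have hbot : Tendsto (fun t => m μ₀ * exp (e μ₀ * t) + ∑ μ ∈ T, |m μ|) atTop atBot :=
    tendsto_atBot_add_const_right _ _
      ((tendsto_exp_atTop.comp (tendsto_id.const_mul_atTop he)).const_mul_atTop_of_neg
        (h μ₀ hμ₀ he))
  obtain ⟨t, ht, hneg⟩ :=
    ((eventually_ge_atTop 0).and (hbot.eventually (eventually_lt_atBot 0))).exists
  linarith [hnn t ht, hbound t ht]

end ExpSum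

section Enclosed

variable {ι : Type*} {T : Finset ι} {m e : ι → ℝ} {a b : ℝ}

/-- The one-variable form of a pair of enclosing hyperplanes `(H_{v,a}, H_{v,b})`. -/
def EnclosedBy (T : Finset ι) (m e : ι → ℝ) (a b : ℝ) : Prop :=
  ∀ μ ∈ T, (0 < m μ → b ≤ e μ ∧ e μ ≤ a) ∧ (m μ < 0 → a ≤ e μ ∨ e μ ≤ b)

/-- The terms of `f|_A`; `lowerPart` collects those of `f|_B`. -/
noncomputable def upperPart (T : Finset ι) (m e : ι → ℝ) (a : ℝ) : Finset ι :=
  {μ ∈ T | 0 < m μ ∨ m μ < 0 ∧ a ≤ e μ}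

noncomputable def lowerPart (T : Finset ι) (m e : ι → ℝ) (b : ℝ) : Finset ι :=
  {μ ∈ T | 0 < m μ ∨ m μ < 0 ∧ e μ ≤ b}

lemma upperPart_neg_exponent : upperPart T m (fun μ => -e μ) (-b) = lowerPart T m e b :=
  Finset.filter_congr fun μ _ => by simp only [neg_le_neg_iff]

lemma EnclosedBy.neg_exponent (hE : EnclosedBy T m e a b) :
    EnclosedBy T m (fun μ => -e μ) (-b) (-a) := fun μ hμ =>
  ⟨fun h => by have := (hE μ hμ).1 h; constructor <;> linarith,
    fun h => by rcases (hE μ hμ).2 h with h' | h' <;> [right; left] <;> linarith⟩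

lemma EnclosedBy.le_of_pos (hE : EnclosedBy T m e a b) : ∀ μ ∈ T, 0 < m μ → e μ ≤ a :=
  fun μ hμ hm => ((hE μ hμ).1 hm).2

lemma EnclosedBy.mul_sub_mul_sub_nonpos (hE : EnclosedBy T m e a b) (hab : b ≤ a) :
    ∀ μ ∈ T, m μ * ((e μ - a) * (e μ - b)) ≤ 0 := by
  intro μ hμ
  rcases lt_trichotomy (m μ) 0 with hm | hm | hm
  · refine mul_nonpos_of_nonpos_of_nonneg hm.le ?_
    rcases (hE μ hμ).2 hm with h | h
    · exact mul_nonneg (by linarith) (by linarith)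
    · exact mul_nonneg_of_nonpos_of_nonpos (by linarith) (by linarith)
  · simp [hm]
  · obtain ⟨h₁, h₂⟩ := (hE μ hμ).1 hm
    exact mul_nonpos_of_nonneg_of_nonpos hm.le
      (mul_nonpos_of_nonpos_of_nonneg (by linarith) (by linarith))

/-- As `t → ∞`, `0 ≤ f|_A` rules out negative terms above `a`, and then `f < 0` forces the terms
at `a` to cancel. -/
lemma top_terms_cancel_of_upperPart_nonneg (hpos : ∀ μ ∈ T, 0 < m μ → e μ ≤ a)
    (hF : ∀ t, 0 ≤ t → expSum T m e t < 0)
    (hFA : ∀ t, 0 ≤ t → 0 ≤ expSum (upperPart T m e a) m e t) :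
    (∀ μ ∈ T, a < e μ → m μ = 0) ∧ ∑ μ ∈ T with e μ = a, m μ = 0 := by
  have hA : ∀ μ ∈ upperPart T m e a, e μ - a ≤ 0 := by
    refine exponent_nonpos_of_expSum_nonneg (m := m) (fun μ hμ he => ?_) fun t ht => ?_
    · obtain ⟨hμT, hm | hm⟩ := Finset.mem_filter.1 hμ
      · linarith [hpos μ hμT hm]
      · exact hm.1
    · rw [expSum_sub_exponent]
      exact mul_nonneg (exp_pos _).le (hFA t ht)
  have hzero : ∀ μ ∈ T, a < e μ → m μ = 0 := by
    intro μ hμ he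
    by_contra hm
    rcases lt_or_gt_of_ne hm with hm | hm
    · linarith [hA μ (Finset.mem_filter.2 ⟨hμ, Or.inr ⟨hm, he.le⟩⟩)]
    · linarith [hpos μ hμ hm]
  refine ⟨hzero, le_antisymm ?_ ?_⟩
  · have hlim := tendsto_expSum_atTop (T := T) (m := m) (e := fun μ => e μ - a)
      fun μ hμ he => hzero μ hμ (by linarith)
    have := le_of_tendsto hlim (eventually_atTop.2 ⟨0, fun t ht => by
      rw [expSum_sub_exponent]; exact (mul_neg_of_pos_of_neg (exp_pos _) (hF t ht)).le⟩)
    simpa only [sub_eq_zero] using this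
  · have hlim := tendsto_expSum_atTop (T := upperPart T m e a) (m := m) (e := fun μ => e μ - a)
      fun μ hμ he => absurd (hA μ hμ) (not_le.2 he)
    have := ge_of_tendsto hlim (eventually_atTop.2 ⟨0, fun t ht => by
      rw [expSum_sub_exponent]; exact mul_nonneg (exp_pos _).le (hFA t ht)⟩)
    refine this.trans_eq ?_
    simp only [upperPart, Finset.filter_filter, Finset.sum_filter, sub_eq_zero]
    refine Finset.sum_congr rfl fun μ _ => ?_
    rcases lt_trichotomy (m μ) 0 with hm | hm | hm <;> by_cases he : e μ = a <;>
      simp [hm, he, not_lt_of_gt]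

lemma EnclosedBy.expSum_neg_of_upperPart_nonneg (hE : EnclosedBy T m e a b)
    (hF : ∀ t, 0 ≤ t → expSum T m e t < 0)
    (hFA : ∀ t, 0 ≤ t → 0 ≤ expSum (upperPart T m e a) m e t) (t : ℝ) :
    expSum T m e t < 0 := by
  obtain ⟨hzero, hsum⟩ := top_terms_cancel_of_upperPart_nonneg hE.le_of_pos hF hFA
  have hbelow : ∀ s, expSum T m e s = expSum {μ ∈ T | e μ < a} m e s := by
    intro s
    have hcancel : ∑ μ ∈ T with ¬e μ < a, m μ * exp (e μ * s) = 0 := by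
      rw [← Finset.sum_subset (s₁ := {μ ∈ T | e μ = a}) (fun μ hμ => ?_) fun μ hμ hμ' => ?_]
      · rw [Finset.sum_congr rfl fun μ hμ => by rw [(Finset.mem_filter.1 hμ).2],
          ← Finset.sum_mul, hsum, zero_mul]
      · simp_all [Finset.mem_filter]
      · simp only [Finset.mem_filter, not_lt] at hμ hμ'
        rw [hzero μ hμ.1 (hμ.2.lt_of_ne' fun h => hμ' ⟨hμ.1, h⟩), zero_mul]
    rw [expSum, expSum, ← Finset.sum_filter_add_sum_filter_not T (fun μ => e μ < a), hcancel,
      add_zero]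
  rcases le_total 0 t with ht | ht
  · exact hF t ht
  · refine hbelow t ▸ expSum_neg_of_ge (c := b) (fun μ hμ => ?_) ht (hbelow 0 ▸ hF 0 le_rfl)
    obtain ⟨hμT, hμa⟩ := Finset.mem_filter.1 hμ
    rcases lt_trichotomy (m μ) 0 with hm | hm | hm
    · refine mul_nonneg_of_nonpos_of_nonpos hm.le ?_
      rcases (hE μ hμT).2 hm with h | h <;> linarith
    · simp [hm]
    · exact mul_nonneg hm.le (by linarith [((hE μ hμT).1 hm).1])

lemma EnclosedBy.sum_nonneg_of_cancel (hE : EnclosedBy T m e a b)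
    (hza : ∀ μ ∈ T, a < e μ → m μ = 0) (hsa : ∑ μ ∈ T with e μ = a, m μ = 0)
    (hzb : ∀ μ ∈ T, e μ < b → m μ = 0) (hsb : ∑ μ ∈ T with e μ = b, m μ = 0) :
    0 ≤ ∑ μ ∈ T, m μ := by
  rw [← Finset.sum_filter_add_sum_filter_not T (fun μ => e μ = a), hsa, zero_add,
    ← Finset.sum_filter_add_sum_filter_not _ (fun μ => e μ = b), Finset.filter_filter,
    Finset.filter_filter]
  have hb : ∑ μ ∈ T with ¬e μ = a ∧ e μ = b, m μ = 0 := by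
    by_cases hab : a = b
    · simp [hab]
    · rw [← hsb]
      exact Finset.sum_congr (Finset.filter_congr fun μ _ => by grind) fun _ _ => rfl
  rw [hb, zero_add]
  refine Finset.sum_nonneg fun μ hμ => ?_
  simp only [Finset.mem_filter] at hμ
  obtain ⟨hμT, hna, hnb⟩ := hμ
  by_contra! hm
  have hle : e μ ≤ a := not_lt.1 fun h => hm.ne (hza μ hμT h)
  have hge : b ≤ e μ := not_lt.1 fun h => hm.ne (hzb μ hμT h)
  rcases (hE μ hμT).2 hm with h | h
  · exact hna (le_antisymm hle h)
  · exact hnb (le_antisymm h hge)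

lemma bottom_terms_cancel_of_lowerPart_nonneg (hpos : ∀ μ ∈ T, 0 < m μ → b ≤ e μ)
    (hF : ∀ t ≤ 0, expSum T m e t < 0) (hFB : ∀ t ≤ 0, 0 ≤ expSum (lowerPart T m e b) m e t) :
    (∀ μ ∈ T, e μ < b → m μ = 0) ∧ ∑ μ ∈ T with e μ = b, m μ = 0 := by
  have := top_terms_cancel_of_upperPart_nonneg (e := fun μ => -e μ) (a := -b)
    (fun μ hμ hm => neg_le_neg (hpos μ hμ hm))
    (fun t ht => by rw [expSum_neg_exponent]; exact hF _ (by linarith))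
    (fun t ht => by rw [upperPart_neg_exponent, expSum_neg_exponent]; exact hFB _ (by linarith))
  simpa only [neg_lt_neg_iff, neg_inj] using this

lemma EnclosedBy.expSum_neg_of_lowerPart_nonneg (hE : EnclosedBy T m e a b)
    (hF : ∀ t ≤ 0, expSum T m e t < 0)
    (hFB : ∀ t ≤ 0, 0 ≤ expSum (lowerPart T m e b) m e t) (t : ℝ) :
    expSum T m e t < 0 := by
  have := hE.neg_exponent.expSum_neg_of_upperPart_nonneg
    (fun s hs => by rw [expSum_neg_exponent]; exact hF _ (by linarith))
    (fun s hs => by rw [upperPart_neg_exponent, expSum_neg_exponent]; exact hFB _ (by linarith))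
    (-t)
  rwa [expSum_neg_exponent, neg_neg] at this

theorem EnclosedBy.exists_expSum_neg_path (hE : EnclosedBy T m e a b) (hab : b ≤ a)
    (h0 : expSum T m e 0 < 0) :
    ∃ t, (∀ s ∈ Set.uIcc 0 t, expSum T m e s < 0) ∧
      (expSum (upperPart T m e a) m e t < 0 ∨ expSum (lowerPart T m e b) m e t < 0) := by
  by_contra! H
  have hray : (∀ t, 0 ≤ t → expSum T m e t < 0) ∨ (∀ t ≤ 0, expSum T m e t < 0) := by
    by_contra! h
    obtain ⟨⟨t₂, ht₂, h₂⟩, ⟨t₁, ht₁, h₁⟩⟩ := h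
    exact h0.not_ge ((ordConnected_setOf_expSum_nonneg (hE.mul_sub_mul_sub_nonpos hab)).out
      h₁ h₂ ⟨ht₁, ht₂⟩)
  have hall : ∀ t, expSum T m e t < 0 := by
    rcases hray with hI | hI
    · exact hE.expSum_neg_of_upperPart_nonneg hI fun t ht =>
        (H t fun s hs => hI s (Set.uIcc_of_le ht ▸ hs).1).1
    · exact hE.expSum_neg_of_lowerPart_nonneg hI fun t ht =>
        (H t fun s hs => hI s (Set.uIcc_of_ge ht ▸ hs).2).2
  have hA := top_terms_cancel_of_upperPart_nonneg hE.le_of_pos (fun t _ => hall t)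
    fun t _ => (H t fun s _ => hall s).1
  have hB := bottom_terms_cancel_of_lowerPart_nonneg (fun μ hμ hm => ((hE μ hμ).1 hm).1)
    (fun t _ => hall t) fun t _ => (H t fun s _ => hall s).2
  exact h0.not_ge (by simpa [expSum] using hE.sum_nonneg_of_cancel hA.1 hA.2 hB.1 hB.2)

end Enclosed

section Components

variable {n : ℕ} {X Y Z : Set (Fin n → ℝ)}

lemma isConnComp_connectedComponentIn {x : Fin n → ℝ} (hx : x ∈ X) :
    IsConnComp X (connectedComponentIn X x) :=
  ⟨⟨x, mem_connectedComponentIn hx⟩, connectedComponentIn_subset X x,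
    isPreconnected_connectedComponentIn, fun _ hUW hWX hW =>
      (hW.subset_connectedComponentIn (hUW (mem_connectedComponentIn hx)) hWX).antisymm hUW⟩

lemma IsConnComp.eq_connectedComponentIn {U : Set (Fin n → ℝ)} {x : Fin n → ℝ}
    (hU : IsConnComp X U) (hx : x ∈ U) : U = connectedComponentIn X x :=
  (hU.2.2.2 _ (hU.2.2.1.subset_connectedComponentIn hx hU.2.1)
    (connectedComponentIn_subset X x) isPreconnected_connectedComponentIn).symm

noncomputable def ambientComp (hXY : X ⊆ Y) (U : {U // IsConnComp X U}) :
    {W // IsConnComp Y W} :=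
  ⟨connectedComponentIn Y U.2.1.some,
    isConnComp_connectedComponentIn (hXY (U.2.2.1 U.2.1.some_mem))⟩

lemma ambientComp_val (hXY : X ⊆ Y) (U : {U // IsConnComp X U}) {x : Fin n → ℝ}
    (hx : x ∈ U.1) : (ambientComp hXY U).1 = connectedComponentIn Y x :=
  connectedComponentIn_eq
    (U.2.2.2.1.subset_connectedComponentIn U.2.1.some_mem (U.2.2.1.trans hXY) hx)

lemma compCard_le_mk_quot (hX : X ⊆ Y) (hZ : Z ⊆ Y)
    (hmeet : ∀ y ∈ Y, ∃ z ∈ connectedComponentIn Y y, z ∈ X ∨ z ∈ Z) :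
    compCard Y ≤ Cardinal.mk (Quot (fun p q :
        {U : Set (Fin n → ℝ) // IsConnComp X U} ⊕ {V : Set (Fin n → ℝ) // IsConnComp Z V} =>
      ∃ U V', p = Sum.inl U ∧ q = Sum.inr V' ∧ (U.1 ∩ V'.1).Nonempty)) := by
  refine Cardinal.mk_le_of_surjective (f := Quot.lift (Sum.elim (ambientComp hX) (ambientComp hZ))
    ?_) ?_
  · rintro _ _ ⟨U, V, rfl, rfl, w, hwU, hwV⟩
    exact Subtype.ext ((ambientComp_val hX U hwU).trans (ambientComp_val hZ V hwV).symm)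
  · rintro ⟨W, hW⟩
    obtain ⟨y, hy⟩ := hW.1
    obtain ⟨z, hz, hzX | hzZ⟩ := hmeet y (hW.2.1 hy)
    all_goals
      have hW' : connectedComponentIn Y z = W :=
        ((hW.eq_connectedComponentIn hy).trans (connectedComponentIn_eq hz)).symm
    · exact ⟨Quot.mk _ (Sum.inl ⟨_, isConnComp_connectedComponentIn hzX⟩),
        Subtype.ext ((ambientComp_val hX _ (mem_connectedComponentIn hzX)).trans hW')⟩
    · exact ⟨Quot.mk _ (Sum.inr ⟨_, isConnComp_connectedComponentIn hzZ⟩),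
        Subtype.ext ((ambientComp_val hZ _ (mem_connectedComponentIn hzZ)).trans hW')⟩

end Components

section Signomial

variable {n : ℕ} {S : Finset (Fin n → ℝ)} {c : (Fin n → ℝ) → ℝ} {x v : Fin n → ℝ} {a b : ℝ}

lemma negSetOn_subset_negSet {F : Set (Fin n → ℝ)} (hF : sigPosS S c ⊆ F) :
    negSetOn S c F ⊆ negSet S c := by
  rintro y ⟨hypos, hyneg⟩
  refine ⟨hypos, lt_of_le_of_lt (Finset.sum_le_sum fun μ hμ => ?_) hyneg⟩
  split_ifs with hμF
  · exact le_rfl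
  · exact mul_nonpos_of_nonpos_of_nonneg (not_lt.1 fun hc => hμF (hF ⟨hμ, hc⟩))
      (Finset.prod_nonneg fun i _ => rpow_nonneg (hypos i).le _)

lemma pos_mul_prod_rpow_iff (hx : ∀ i, 0 < x i) {μ : Fin n → ℝ} :
    0 < c μ * ∏ i, x i ^ μ i ↔ 0 < c μ :=
  mul_pos_iff_of_pos_right (Finset.prod_pos fun i _ => rpow_pos_of_pos (hx i) _)

lemma mul_prod_rpow_neg_iff (hx : ∀ i, 0 < x i) {μ : Fin n → ℝ} :
    c μ * ∏ i, x i ^ μ i < 0 ↔ c μ < 0 := by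
  have hP : 0 < ∏ i, x i ^ μ i := Finset.prod_pos fun i _ => rpow_pos_of_pos (hx i) _
  exact ⟨fun h => neg_of_mul_neg_left h hP.le, fun h => mul_neg_of_neg_of_pos h hP⟩

noncomputable def expCurve (x v : Fin n → ℝ) (t : ℝ) : Fin n → ℝ :=
  fun i => x i * exp (v i * t)

lemma expCurve_pos (hx : ∀ i, 0 < x i) (t : ℝ) (i : Fin n) : 0 < expCurve x v t i :=
  mul_pos (hx i) (exp_pos _)

lemma continuous_expCurve (x v : Fin n → ℝ) : Continuous (expCurve x v) :=
  continuous_pi fun i => by unfold expCurve; fun_prop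

lemma expCurve_zero (x v : Fin n → ℝ) : expCurve x v 0 = x := by
  ext i
  simp [expCurve]

lemma prod_expCurve_rpow (hx : ∀ i, 0 < x i) (μ : Fin n → ℝ) (t : ℝ) :
    ∏ i, expCurve x v t i ^ μ i = (∏ i, x i ^ μ i) * exp ((∑ i, v i * μ i) * t) := by
  rw [Finset.sum_mul, exp_sum, ← Finset.prod_mul_distrib]
  refine Finset.prod_congr rfl fun i _ => ?_
  rw [expCurve, mul_rpow (hx i).le (exp_pos _).le, ← exp_mul]
  ring_nf

open Classical in
lemma sigOn_expCurve (hx : ∀ i, 0 < x i) (F : Set (Fin n → ℝ)) (t : ℝ) :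
    sigOn S c F (expCurve x v t) =
      expSum {μ ∈ S | μ ∈ F} (fun μ => c μ * ∏ i, x i ^ μ i) (fun μ => ∑ i, v i * μ i) t := by
  rw [sigOn, expSum, Finset.sum_filter]
  refine Finset.sum_congr rfl fun μ _ => ?_
  rw [prod_expCurve_rpow hx, mul_assoc]

lemma sig_expCurve (hx : ∀ i, 0 < x i) (t : ℝ) :
    sig S c (expCurve x v t) =
      expSum S (fun μ => c μ * ∏ i, x i ^ μ i) (fun μ => ∑ i, v i * μ i) t := by
  rw [sig, expSum]
  refine Finset.sum_congr rfl fun μ _ => ?_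
  rw [prod_expCurve_rpow hx, mul_assoc]

lemma enclosedBy_of_enclosing (hx : ∀ i, 0 < x i)
    (hpos : sigPosS S c ⊆ Hminus v a ∩ Hplus v b)
    (hneg : sigNegS S c ⊆ (HminusO v a ∩ HplusO v b)ᶜ) :
    EnclosedBy S (fun μ => c μ * ∏ i, x i ^ μ i) (fun μ => ∑ i, v i * μ i) a b := fun μ hμ =>
  ⟨fun h => (hpos ⟨hμ, (pos_mul_prod_rpow_iff hx).1 h⟩).symm, fun h => by
    simpa only [mem_compl_iff, mem_inter_iff, HminusO, HplusO, mem_ofPred_eq, not_and_or,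
      not_lt] using hneg ⟨hμ, (mul_prod_rpow_neg_iff hx).1 h⟩⟩

lemma exists_mem_negSetOn_of_mem_negSet (hab : b ≤ a)
    (hpos : sigPosS S c ⊆ Hminus v a ∩ Hplus v b)
    (hneg : sigNegS S c ⊆ (HminusO v a ∩ HplusO v b)ᶜ) (hx : x ∈ negSet S c) :
    ∃ z ∈ connectedComponentIn (negSet S c) x,
      z ∈ negSetOn S c ((Hplus v a ∩ sigNegS S c) ∪ sigPosS S c) ∨
      z ∈ negSetOn S c ((Hminus v b ∩ sigNegS S c) ∪ sigPosS S c) := by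
  classical
  obtain ⟨hxpos, hxneg⟩ := hx
  obtain ⟨t, hpath, hAB⟩ := (enclosedBy_of_enclosing hxpos hpos hneg).exists_expSum_neg_path hab
    (by rwa [← sig_expCurve hxpos, expCurve_zero])
  have hcc : expCurve x v '' Set.uIcc 0 t ⊆ connectedComponentIn (negSet S c) x := by
    refine (isPreconnected_uIcc.image _ (continuous_expCurve x v).continuousOn
      ).subset_connectedComponentIn ⟨0, Set.left_mem_uIcc, expCurve_zero x v⟩ ?_
    rintro _ ⟨s, hs, rfl⟩
    exact ⟨expCurve_pos hxpos s, by rw [sig_expCurve hxpos]; exact hpath s hs⟩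
  refine ⟨expCurve x v t, hcc ⟨t, Set.right_mem_uIcc, rfl⟩, ?_⟩
  rcases hAB with h | h <;> [left; right] <;> refine ⟨expCurve_pos hxpos t, ?_⟩ <;>
    rw [sigOn_expCurve hxpos] <;> convert h using 2 <;> ext μ <;>
    simp only [upperPart, lowerPart, Finset.mem_filter, mem_union, mem_inter_iff, Hplus, Hminus,
      sigNegS, sigPosS, mem_ofPred_eq, pos_mul_prod_rpow_iff hxpos, mul_prod_rpow_neg_iff hxpos] <;>
    tauto

end Signomial

/-- The components of the intersection graph are modelled as the quotient of its vertex set by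
the edge relation (`Quot` passes to the equivalence relation it generates). -/
theorem stmt_7_general (n : ℕ) (S : Finset (Fin n → ℝ)) (c : (Fin n → ℝ) → ℝ)
    (v : Fin n → ℝ) (a b : ℝ) (hab : b ≤ a)
    (hpos : sigPosS S c ⊆ Hminus v a ∩ Hplus v b)
    (hneg : sigNegS S c ⊆ (HminusO v a ∩ HplusO v b)ᶜ)
    (A B : Set (Fin n → ℝ))
    (hA : A = (Hplus v a ∩ sigNegS S c) ∪ sigPosS S c)
    (hB : B = (Hminus v b ∩ sigNegS S c) ∪ sigPosS S c)
    (C : Cardinal)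
    (hC : C = Cardinal.mk (Quot (fun p q :
        {U : Set (Fin n → ℝ) // IsConnComp (negSetOn S c A) U} ⊕
        {V : Set (Fin n → ℝ) // IsConnComp (negSetOn S c B) V} =>
      ∃ U V', p = Sum.inl U ∧ q = Sum.inr V' ∧ (U.1 ∩ V'.1).Nonempty))) :
    compCard (negSet S c) ≤ C ∧
      C ≤ compCard (negSetOn S c A) + compCard (negSetOn S c B) := by
  subst hA hB hC
  refine ⟨compCard_le_mk_quot (negSetOn_subset_negSet subset_union_right)
    (negSetOn_subset_negSet subset_union_right)
    fun x hx => exists_mem_negSetOn_of_mem_negSet hab hpos hneg hx, ?_⟩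
  exact Cardinal.mk_quot_le.trans_eq
    (by rw [Cardinal.mk_sum, Cardinal.lift_id, Cardinal.lift_id]; rfl)

/-- Proposition 2.10: the number of negative connected components of `f` is bounded by the
number of connected components `C` of the bipartite intersection graph on the components of
`f|_A` and `f|_B`, which is in turn at most the total number of those components.
The components of the graph are modelled as the quotient of the vertex set by (the
equivalence relation generated by) the edge relation. -/
theorem stmt_7 (n : ℕ) (S : Finset (Fin n → ℝ)) (c : (Fin n → ℝ) → ℝ)
    (hc : ∀ μ ∈ S, c μ ≠ 0)
    (v : Fin n → ℝ) (hv : v ≠ 0) (a b : ℝ) (hab : b ≤ a)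
    (hpos : sigPosS S c ⊆ Hminus v a ∩ Hplus v b)
    (hneg : sigNegS S c ⊆ (HminusO v a ∩ HplusO v b)ᶜ)
    (A B : Set (Fin n → ℝ))
    (hA : A = (Hplus v a ∩ sigNegS S c) ∪ sigPosS S c)
    (hB : B = (Hminus v b ∩ sigNegS S c) ∪ sigPosS S c)
    (C : Cardinal)
    (hC : C = Cardinal.mk (Quot (fun p q :
        {U : Set (Fin n → ℝ) // IsConnComp (negSetOn S c A) U} ⊕
        {V : Set (Fin n → ℝ) // IsConnComp (negSetOn S c B) V} =>
      ∃ U V', p = Sum.inl U ∧ q = Sum.inr V' ∧ (U.1 ∩ V'.1).Nonempty))) :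
    compCard (negSet S c) ≤ C ∧
      C ≤ compCard (negSetOn S c A) + compCard (negSetOn S c B) :=
  stmt_7_general n S c v a b hab hpos hneg A B hA hB C hC
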